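/- arXiv:math/0107031 — 5 statements merged into one kernel-verified Lean document; each statement's English description precedes it below -/
import Mathlib

section
/- Let q̃ be a finite-dimensional Lie algebra over a field k of characteristic 0 and let q be a Lie ideal of q̃, regarded as a q̃-module via the adjoint action. Then ind q + ind q̃ ≤ dim(q̃/q) + 2·ind(q̃, q). -/
open Module

section Defs

variable (k : Type*) [Field k]

/-- The stabiliser `q_ξ = {x ∈ q | ξ ⁅x, y⁆ = 0 for all y}` of a linear form `ξ ∈ q*`. -/
def lieStab (q : Type*) [LieRing q] [LieAlgebra k q] (ξ : Module.Dual k q) :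
    Submodule k q where
  carrier := {x : q | ∀ y : q, ξ ⁅x, y⁆ = 0}
  add_mem' := by
    intro a b ha hb y
    rw [add_lie, map_add, ha y, hb y, add_zero]
  zero_mem' := by
    intro y
    rw [zero_lie, map_zero]
  smul_mem' := by
    intro c a ha y
    rw [smul_lie, map_smul, ha y, smul_zero]

/-- The index of a Lie algebra: the minimal dimension of the stabiliser of a linear form. -/
noncomputable def lieIndex (q : Type*) [LieRing q] [LieAlgebra k q] : ℕ :=
  ⨅ ξ : Module.Dual k q, Module.finrank k ↥(lieStab k q ξ)

/-- The index of a representation `ρ : q → End V`, namely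
`dim V - max over ξ ∈ V* of dim (q · ξ)`, where `q · ξ = {v ↦ ξ (ρ s v) : s ∈ q} ⊆ V*`. -/
noncomputable def lieRepIndex {q V : Type*} [AddCommGroup q] [Module k q]
    [AddCommGroup V] [Module k V] (ρ : q →ₗ[k] Module.End k V) : ℕ :=
  Module.finrank k V -
    ⨆ ξ : Module.Dual k V,
      Module.finrank k ↥(LinearMap.range ((LinearMap.llcomp k V V k ξ) ∘ₗ ρ))

end Defs

/-!
Pick `ξ₀ ∈ I*` whose orbit `Q · ξ₀` has maximal dimension `dim I - ind (Q, I)` and extend it to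
`ξ ∈ Q*`. Let `ψ : Q → I*`, `s ↦ ξ ⁅s, ·⁆|_I`, so that `Q · ξ₀ = range ψ`, and put `K = Q_ξ`,
`P = ker ψ`. Then `K ≤ P`, `I_ξ₀ = I ∩ P`, and by skew-symmetry `range ψ` annihilates `I ∩ K`.
Hence `ind I + ind Q ≤ dim (I ∩ P) + dim K ≤ dim (I ∩ K) + dim P` and
`dim (I ∩ K) ≤ dim I - dim range ψ = ind (Q, I)`, `dim P = dim Q - dim I + ind (Q, I)`.
-/

theorem Submodule.finrank_add_finrank_le_finrank_inf_add_finrank {K V : Type*} [DivisionRing K]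
    [AddCommGroup V] [Module K V] [FiniteDimensional K V] {S T P : Submodule K V}
    (hS : S ≤ P) (hT : T ≤ P) :
    finrank K S + finrank K T ≤ finrank K ↥(S ⊓ T) + finrank K P := by
  rw [← finrank_sup_add_finrank_inf_eq, add_comm]
  exact Nat.add_le_add_left (Submodule.finrank_mono (sup_le hS hT)) _

theorem exists_lieRepIndex_add_finrank_range_eq {k q V : Type*} [Field k] [AddCommGroup q]
    [Module k q] [AddCommGroup V] [Module k V] [FiniteDimensional k V]
    (ρ : q →ₗ[k] Module.End k V) :
    ∃ ξ : Dual k V, lieRepIndex k ρ +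
      finrank k ↥(LinearMap.range (LinearMap.llcomp k V V k ξ ∘ₗ ρ)) = finrank k V := by
  set f : Dual k V → ℕ := fun ξ => finrank k ↥(LinearMap.range (LinearMap.llcomp k V V k ξ ∘ₗ ρ))
  have hf : ∀ ξ, f ξ ≤ finrank k V := fun ξ =>
    (Submodule.finrank_le _).trans_eq Subspace.dual_finrank_eq
  obtain ⟨ξ, hξ⟩ : (⨆ ξ, f ξ) ∈ Set.range f :=
    Nat.sSup_mem (Set.range_nonempty f) ⟨_, Set.forall_mem_range.2 hf⟩
  refine ⟨ξ, show lieRepIndex k ρ + f ξ = _ from ?_⟩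
  have : lieRepIndex k ρ = finrank k V - f ξ := by rw [hξ]; rfl
  have := hf ξ
  omega

theorem lieIndex_le_finrank_lieStab {k q : Type*} [Field k] [LieRing q] [LieAlgebra k q]
    (ξ : Dual k q) : lieIndex k q ≤ finrank k ↥(lieStab k q ξ) :=
  ciInf_le (OrderBot.bddBelow _) ξ

namespace LieIdeal

variable {k Q : Type*} [Field k] [LieRing Q] [LieAlgebra k Q] (I : LieIdeal k Q) (ξ : Dual k Q)

/-- Its range is the orbit `Q · ξ|_I ⊆ I*` whose dimension enters `lieRepIndex`. -/
def restrictCoad : Q →ₗ[k] Dual k I :=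
  LinearMap.llcomp k I I k (ξ ∘ₗ I.toSubmodule.subtype) ∘ₗ
    (LieModule.toEnd k Q I : Q →ₗ[k] End k I)

@[simp]
theorem restrictCoad_apply (s : Q) (v : I) : restrictCoad I ξ s v = ξ ⁅s, (v : Q)⁆ :=
  rfl

theorem lieStab_le_ker_restrictCoad : lieStab k Q ξ ≤ LinearMap.ker (restrictCoad I ξ) :=
  fun _ hx => LinearMap.ext fun v => hx v

theorem lieStab_comp_subtype_eq_comap :
    lieStab k I (ξ ∘ₗ I.toSubmodule.subtype) =
      (LinearMap.ker (restrictCoad I ξ)).comap I.toSubmodule.subtype := by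
  ext x
  simp only [Submodule.mem_comap, LinearMap.mem_ker, LinearMap.ext_iff]
  rfl

theorem finrank_lieStab_comp_subtype :
    finrank k ↥(lieStab k I (ξ ∘ₗ I.toSubmodule.subtype)) =
      finrank k ↥(I.toSubmodule ⊓ LinearMap.ker (restrictCoad I ξ)) := by
  rw [lieStab_comp_subtype_eq_comap, ← Submodule.map_comap_subtype,
    Submodule.finrank_map_subtype_eq]
  rfl

theorem range_restrictCoad_le_dualAnnihilator :
    LinearMap.range (restrictCoad I ξ) ≤
      ((lieStab k Q ξ).comap I.toSubmodule.subtype).dualAnnihilator := by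
  rintro _ ⟨s, rfl⟩
  rw [Submodule.mem_dualAnnihilator]
  intro v hv
  rw [restrictCoad_apply, ← lie_skew, map_neg, neg_eq_zero]
  exact hv s

theorem finrank_range_restrictCoad_add_finrank_inf_le [FiniteDimensional k Q] :
    finrank k ↥(LinearMap.range (restrictCoad I ξ)) +
      finrank k ↥(I.toSubmodule ⊓ lieStab k Q ξ) ≤ finrank k I.toSubmodule := by
  rw [← Submodule.map_comap_subtype, Submodule.finrank_map_subtype_eq, add_comm]
  calc _ ≤ finrank k ↥((lieStab k Q ξ).comap I.toSubmodule.subtype) +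
        finrank k ↥((lieStab k Q ξ).comap I.toSubmodule.subtype).dualAnnihilator := by
        gcongr
        exact Submodule.finrank_mono (range_restrictCoad_le_dualAnnihilator I ξ)
    _ = _ := Subspace.finrank_add_finrank_dualAnnihilator_eq _

end LieIdeal

theorem lieIndex_ideal_add_lieIndex_le_general
    (k : Type*) [Field k]
    (Q : Type*) [LieRing Q] [LieAlgebra k Q] [FiniteDimensional k Q]
    (I : LieIdeal k Q) :
    lieIndex k ↥I + lieIndex k Q ≤
      Module.finrank k (Q ⧸ I) +
        2 * lieRepIndex k (LieModule.toEnd k Q ↥I : Q →ₗ[k] Module.End k ↥I) := by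
  obtain ⟨ξ₀, hξ₀⟩ := exists_lieRepIndex_add_finrank_range_eq
    (LieModule.toEnd k Q I : Q →ₗ[k] End k I)
  obtain ⟨ξ, rfl⟩ := LinearMap.exists_extend ξ₀
  have hI := (lieIndex_le_finrank_lieStab _).trans_eq (LieIdeal.finrank_lieStab_comp_subtype I ξ)
  have hQ := lieIndex_le_finrank_lieStab ξ
  have hsum := Submodule.finrank_add_finrank_le_finrank_inf_add_finrank
    (S := I.toSubmodule ⊓ LinearMap.ker (LieIdeal.restrictCoad I ξ)) inf_le_right
    (LieIdeal.lieStab_le_ker_restrictCoad I ξ)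
  rw [inf_assoc, inf_eq_right.2 (LieIdeal.lieStab_le_ker_restrictCoad I ξ)] at hsum
  have horbit := LieIdeal.finrank_range_restrictCoad_add_finrank_inf_le I ξ
  have hker := LinearMap.finrank_range_add_finrank_ker (LieIdeal.restrictCoad I ξ)
  have hquot := Submodule.finrank_quotient_add_finrank I.toSubmodule
  change _ + finrank k ↥(LinearMap.range (LieIdeal.restrictCoad I ξ)) =
    finrank k I.toSubmodule at hξ₀
  change _ ≤ finrank k (Q ⧸ I.toSubmodule) + _
  omega

/-- If `q` is a Lie ideal of a finite-dimensional Lie algebra `q̃` over a field of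
characteristic zero, regarded as a `q̃`-module via the adjoint action, then
`ind q + ind q̃ ≤ dim (q̃ / q) + 2 * ind (q̃, q)`. -/
theorem lieIndex_ideal_add_lieIndex_le
    (k : Type*) [Field k] [CharZero k]
    (Q : Type*) [LieRing Q] [LieAlgebra k Q] [FiniteDimensional k Q]
    (I : LieIdeal k Q) :
    lieIndex k ↥I + lieIndex k Q ≤
      Module.finrank k (Q ⧸ I) +
        2 * lieRepIndex k (LieModule.toEnd k Q ↥I : Q →ₗ[k] Module.End k ↥I) :=
  lieIndex_ideal_add_lieIndex_le_general k Q I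
end

section
/- (Vinberg) Let V be a finite-dimensional module over a finite-dimensional Lie algebra q over a field k of characteristic 0, and let w ∈ V. Let q_w = {s ∈ q | s·w = 0} be the stabilizer of w, which acts naturally on the quotient module V̄ = V/(q·w), where q·w = {s·w : s ∈ q}. Then max over v ∈ V of dim(q·v) ≥ (max over η ∈ V̄ of dim(q_w·η)) + dim(q·w). -/
/-!
With `f = orbMap w` and `g = orbMap v`, the orbit map of `w + t • v` is `f + t • g`. Sections
`σ` of `f` onto `range f` and `τ` of `ker f → V ⧸ range f` onto its image `W` give an injective
`F (a, b) = a + g (τ b)` on `range f × W`, and with `G (a, b) = g (σ a)` one has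
`(F + t • G) (a, b) = (f + t • g) (σ a + t⁻¹ • τ b)`. If `Φ` is a left inverse of `F`, then
`F + t • G` is injective as soon as `-t⁻¹` is not one of the finitely many eigenvalues of `Φ ∘ G`,
so `dim (q · (w + t • v)) ≥ dim (q · w) + dim W` for such `t`.
-/

open Module

section Defs

attribute [local instance] LieRing.ofAssociativeRing

variable (k : Type*) [Field k]
variable (q : Type*) [LieRing q] [LieAlgebra k q]
variable (V : Type*) [AddCommGroup V] [Module k V] [LieRingModule q V] [LieModule k q V]

/-- The orbit map `s ↦ s · v` of a vector `v` in a Lie algebra module. -/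
noncomputable def orbMap (v : V) : q →ₗ[k] V :=
  ((LieModule.toEnd k q V).toLinearMap).flip v

/-- The orbit `q · v = {s · v : s ∈ q}` of a vector `v`, as a submodule of `V`. -/
noncomputable def lieOrbit (v : V) : Submodule k V :=
  LinearMap.range (orbMap k q V v)

/-- The stabiliser `q_v = {s ∈ q | s · v = 0}` of a vector `v`. -/
noncomputable def lieVecStab (v : V) : Submodule k q :=
  LinearMap.ker (orbMap k q V v)

end Defs

open Function LinearMap

theorem LinearMap.exists_ne_zero_injective_add_smul {k E V : Type*} [Field k] [Infinite k]
    [AddCommGroup E] [Module k E] [FiniteDimensional k E] [AddCommGroup V] [Module k V]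
    {F : E →ₗ[k] V} (hF : Injective F) (G : E →ₗ[k] V) :
    ∃ t : k, t ≠ 0 ∧ Injective (F + t • G) := by
  obtain ⟨Φ, hΦ⟩ := F.exists_leftInverse_of_injective (ker_eq_bot.mpr hF)
  set A : End k E := Φ ∘ₗ G
  obtain ⟨μ, hμ⟩ := (A.finite_hasEigenvalue.insert 0).exists_notMem
  obtain ⟨hμ0, hμA⟩ := not_or.mp hμ
  refine ⟨-μ⁻¹, by simpa using hμ0, (injective_iff_map_eq_zero _).mpr fun x hx => ?_⟩
  have hAx : μ⁻¹ • A x = x := by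
    have := congr(Φ $hx)
    rw [add_apply, map_add, ← comp_apply Φ F, hΦ, id_apply, smul_apply, map_smul, neg_smul,
      map_zero, ← sub_eq_add_neg, sub_eq_zero] at this
    exact this.symm
  have heigen : A x = μ • x := (inv_smul_eq_iff₀ hμ0).mp hAx
  by_contra hx0
  exact hμA (Module.End.hasEigenvalue_of_hasEigenvector
    ⟨Module.End.mem_eigenspace_iff.mpr heigen, hx0⟩)

theorem LinearMap.exists_finrank_map_mkQ_add_finrank_range_le {k M V : Type*} [Field k]
    [Infinite k] [AddCommGroup M] [Module k M] [AddCommGroup V] [Module k V]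
    [FiniteDimensional k V] (f g : M →ₗ[k] V) :
    ∃ t : k, finrank k (((ker f).map g).map (range f).mkQ) + finrank k (range f) ≤
        finrank k (range (f + t • g)) := by
  set φ := (range f).mkQ ∘ₗ g ∘ₗ (ker f).subtype
  have hφ : range φ = ((ker f).map g).map (range f).mkQ := by
    simp only [φ, range_comp, Submodule.range_subtype]
  obtain ⟨σ, hσ⟩ := f.rangeRestrict.exists_rightInverse_of_surjective f.range_rangeRestrict
  obtain ⟨τ, hτ⟩ := φ.rangeRestrict.exists_rightInverse_of_surjective φ.range_rangeRestrict
  set F := (range f).subtype.coprod (g ∘ₗ (ker f).subtype ∘ₗ τ)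
  set G := g ∘ₗ σ ∘ₗ fst k (range f) (range φ)
  have hF : Injective F := by
    refine (injective_iff_map_eq_zero _).mpr fun ⟨a, b⟩ hab => ?_
    have hb : b = 0 := by
      have hφτ : φ (τ b) = b := congr(Subtype.val ($hτ b))
      have ha : Submodule.Quotient.mk (p := range f) (a : V) = 0 :=
        (Submodule.Quotient.mk_eq_zero _).mpr a.2
      rw [← Submodule.coe_eq_zero, ← hφτ]
      simpa [F, φ, ha] using congr((range f).mkQ $hab)
    subst hb
    simpa [F] using hab
  obtain ⟨t, ht, hFG⟩ := exists_ne_zero_injective_add_smul hF G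
  have hrange : range (F + t • G) ≤ range (f + t • g) := by
    rintro _ ⟨⟨a, b⟩, rfl⟩
    refine ⟨σ a + t⁻¹ • (τ b : M), ?_⟩
    have hfσ : f (σ a) = a := congr(Subtype.val ($hσ a))
    have hfτ : f (τ b) = 0 := (τ b).2
    simp only [F, G, add_apply, smul_apply, map_add, map_smul, hfσ, hfτ,
      coprod_apply, comp_apply, fst_apply, Submodule.subtype_apply]
    rw [zero_add, inv_smul_smul₀ ht]
    abel
  refine ⟨t, ?_⟩
  calc finrank k (((ker f).map g).map (range f).mkQ) + finrank k (range f)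
      = finrank k (range f × range φ) := by rw [finrank_prod, hφ, add_comm]
    _ = finrank k (range (F + t • G)) := (finrank_range_of_inj hFG).symm
    _ ≤ finrank k (range (f + t • g)) := Submodule.finrank_mono hrange

theorem Nat.ciSup_add_le_ciSup {ι ι' : Type*} [Nonempty ι] {a : ι → ℕ} {b : ι' → ℕ} {c : ℕ}
    (ha : BddAbove (Set.range a)) (hb : BddAbove (Set.range b))
    (h : ∀ i, ∃ j, a i + c ≤ b j) : (⨆ i, a i) + c ≤ ⨆ j, b j := by
  obtain ⟨i, hi⟩ := Nat.sSup_mem (Set.range_nonempty a) ha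
  obtain ⟨j, hj⟩ := h i
  rw [iSup, ← hi]
  exact hj.trans (le_ciSup hb j)

theorem orbMap_add_smul {k q V : Type*} [Field k] [LieRing q] [LieAlgebra k q] [AddCommGroup V]
    [Module k V] [LieRingModule q V] [LieModule k q V] (w v : V) (t : k) :
    orbMap k q V (w + t • v) = orbMap k q V w + t • orbMap k q V v := by
  unfold orbMap
  rw [map_add, map_smul]

theorem vinberg_orbit_inequality_general
    (k : Type*) [Field k] [CharZero k]
    (q : Type*) [LieRing q] [LieAlgebra k q]
    (V : Type*) [AddCommGroup V] [Module k V] [LieRingModule q V] [LieModule k q V]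
    [FiniteDimensional k V] (w : V) :
    (⨆ v : V, Module.finrank k
        ↥(Submodule.map (lieOrbit k q V w).mkQ
            (Submodule.map (orbMap k q V v) (lieVecStab k q V w)))) +
      Module.finrank k ↥(lieOrbit k q V w) ≤
    ⨆ v : V, Module.finrank k ↥(lieOrbit k q V v) := by
  refine Nat.ciSup_add_le_ciSup
    ⟨finrank k (V ⧸ lieOrbit k q V w), Set.forall_mem_range.mpr fun _ => Submodule.finrank_le _⟩
    ⟨finrank k V, Set.forall_mem_range.mpr fun _ => Submodule.finrank_le _⟩ fun v => ?_
  obtain ⟨t, ht⟩ := (orbMap k q V w).exists_finrank_map_mkQ_add_finrank_range_le (orbMap k q V v)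
  exact ⟨w + t • v, by rwa [lieOrbit, lieOrbit, orbMap_add_smul]⟩

/-- (Vinberg) Let `V` be a finite-dimensional module over a finite-dimensional Lie algebra `q`
over a field of characteristic zero and let `w ∈ V`.  The stabiliser `q_w` acts naturally on
the quotient module `V̄ = V / (q · w)`, the orbit of the class of `v ∈ V` being the image in
`V̄` of `{s · v : s ∈ q_w}`.  Then
`max over v ∈ V of dim (q · v) ≥ (max over η ∈ V̄ of dim (q_w · η)) + dim (q · w)`. -/
theorem vinberg_orbit_inequality
    (k : Type*) [Field k] [CharZero k]
    (q : Type*) [LieRing q] [LieAlgebra k q] [FiniteDimensional k q]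
    (V : Type*) [AddCommGroup V] [Module k V] [LieRingModule q V] [LieModule k q V]
    [FiniteDimensional k V] (w : V) :
    (⨆ v : V, Module.finrank k
        ↥(Submodule.map (lieOrbit k q V w).mkQ
            (Submodule.map (orbMap k q V v) (lieVecStab k q V w)))) +
      Module.finrank k ↥(lieOrbit k q V w) ≤
    ⨆ v : V, Module.finrank k ↥(lieOrbit k q V v) :=
  vinberg_orbit_inequality_general k q V w
end

section
/- Let g be a finite-dimensional simple Lie algebra over an algebraically closed field of characteristic 0 and let e ∈ g be a nilpotent element. Regard the centraliser z_g(e) as a module over the Lie algebra n_g(e) via the adjoint action. Then ind(n_g(e), z_g(e)) ≥ ind z_g(e) − dim d_g(e). -/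
open Module

section Defs

variable (k : Type*) [Field k]

variable (g : Type*) [LieRing g] [LieAlgebra k g]

/-- The centraliser `z_g(e) = {y ∈ g | ⁅y, e⁆ = 0}` of an element, as a Lie subalgebra. -/
def centAlg (e : g) : LieSubalgebra k g where
  carrier := {y : g | ⁅y, e⁆ = 0}
  add_mem' := by
    intro a b ha hb
    simp only [Set.mem_setOf_eq] at *
    rw [add_lie, ha, hb, add_zero]
  zero_mem' := by simp
  smul_mem' := by
    intro c a ha
    simp only [Set.mem_setOf_eq] at *
    rw [smul_lie, ha, smul_zero]
  lie_mem' := by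
    intro a b ha hb
    simp only [Set.mem_setOf_eq] at *
    rw [lie_lie, ha, hb, lie_zero, lie_zero, sub_zero]

lemma mem_centAlg {e x : g} : x ∈ centAlg k g e ↔ ⁅x, e⁆ = 0 := Iff.rfl

/-- The double centraliser `d_g(e) = {y ∈ g | ⁅y, z⁆ = 0 for all z ∈ z_g(e)}`. -/
def dcent (e : g) : Submodule k g where
  carrier := {y : g | ∀ z : g, ⁅z, e⁆ = 0 → ⁅y, z⁆ = 0}
  add_mem' := by
    intro a b ha hb z hz
    rw [add_lie, ha z hz, hb z hz, add_zero]
  zero_mem' := by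
    intro z hz
    rw [zero_lie]
  smul_mem' := by
    intro c a ha z hz
    rw [smul_lie, ha z hz, smul_zero]

lemma mem_dcent {e x : g} : x ∈ dcent k g e ↔ ∀ z : g, ⁅z, e⁆ = 0 → ⁅x, z⁆ = 0 := Iff.rfl

/-- The natural representation of the normaliser `n_g(e)` on the centraliser `z_g(e)`,
given by the adjoint action. -/
def nzAct (e : g) : ↥((centAlg k g e).normalizer) →ₗ[k] Module.End k ↥(centAlg k g e) where
  toFun s :=
    { toFun := fun v =>
        ⟨⁅(s : g), (v : g)⁆,
          ((centAlg k g e).mem_normalizer_iff (s : g)).mp s.2 (v : g) v.2⟩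
      map_add' := fun v w => Subtype.ext (by
        show ⁅(s : g), (v : g) + (w : g)⁆ = ⁅(s : g), (v : g)⁆ + ⁅(s : g), (w : g)⁆
        exact lie_add _ _ _)
      map_smul' := fun c v => Subtype.ext (by
        show ⁅(s : g), c • (v : g)⁆ = c • ⁅(s : g), (v : g)⁆
        exact lie_smul _ _ _) }
  map_add' s t := LinearMap.ext fun v => Subtype.ext (by
    show ⁅(s : g) + (t : g), (v : g)⁆ = ⁅(s : g), (v : g)⁆ + ⁅(t : g), (v : g)⁆
    exact add_lie _ _ _)
  map_smul' c s := LinearMap.ext fun v => Subtype.ext (by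
    show ⁅c • (s : g), (v : g)⁆ = c • ⁅(s : g), (v : g)⁆
    exact smul_lie _ _ _)

end Defs

section Aux

open Module LinearMap

/-- General linear algebra: composing with an injective map drops the rank by at most
the codimension. -/
lemma aux_rank_comp_le {k M P W : Type*} [Field k] [AddCommGroup M] [Module k M]
    [AddCommGroup P] [Module k P] [AddCommGroup W] [Module k W]
    [FiniteDimensional k M] [FiniteDimensional k P]
    (f : M →ₗ[k] W) (ι : P →ₗ[k] M) (hι : Function.Injective ι) :
    finrank k ↥(LinearMap.range f) + finrank k P ≤
      finrank k ↥(LinearMap.range (f ∘ₗ ι)) + finrank k M := by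
  have h1 := f.finrank_range_add_finrank_ker
  have h2 := (f ∘ₗ ι).finrank_range_add_finrank_ker
  have h3 : finrank k ↥(LinearMap.ker (f ∘ₗ ι)) ≤ finrank k ↥(LinearMap.ker f) := by
    have hle : Submodule.map ι (LinearMap.ker (f ∘ₗ ι)) ≤ LinearMap.ker f := by
      rintro x ⟨y, hy, rfl⟩
      exact hy
    calc finrank k ↥(LinearMap.ker (f ∘ₗ ι))
        = finrank k ↥(Submodule.map ι (LinearMap.ker (f ∘ₗ ι))) :=
          (Submodule.equivMapOfInjective ι hι _).finrank_eq
      _ ≤ finrank k ↥(LinearMap.ker f) := Submodule.finrank_mono hle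
  omega

variable (k : Type*) [Field k] (g : Type*) [LieRing g] [LieAlgebra k g]
  [FiniteDimensional k g] (e : g)

/-- The inclusion of the centraliser into the normaliser of the centraliser. -/
def zToN : ↥(centAlg k g e) →ₗ[k] ↥((centAlg k g e).normalizer) where
  toFun z := ⟨(z : g), LieSubalgebra.le_normalizer (H := centAlg k g e) z.2⟩
  map_add' _ _ := rfl
  map_smul' _ _ := rfl

lemma zToN_injective : Function.Injective (zToN k g e) := by
  intro a b hab
  have h : ((zToN k g e a : ↥((centAlg k g e).normalizer)) : g) =
      ((zToN k g e b : ↥((centAlg k g e).normalizer)) : g) := congrArg _ hab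
  exact Subtype.ext h

/-- The bracket-with-`e` map from the normaliser to the double centraliser. -/
def nToD : ↥((centAlg k g e).normalizer) →ₗ[k] ↥(dcent k g e) where
  toFun s := ⟨⁅(s : g), e⁆, by
    intro z hz
    rw [lie_lie]
    have h1 : ⁅e, z⁆ = 0 := by rw [← lie_skew, hz, neg_zero]
    have h2 : ⁅(s : g), z⁆ ∈ centAlg k g e :=
      ((centAlg k g e).mem_normalizer_iff (s : g)).mp s.2 z hz
    have h3 : ⁅e, ⁅(s : g), z⁆⁆ = 0 := by rw [← lie_skew, h2, neg_zero]
    rw [h1, h3, lie_zero, sub_zero]⟩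
  map_add' s t := Subtype.ext (add_lie _ _ _)
  map_smul' c s := Subtype.ext (smul_lie _ _ _)

lemma finrank_normalizer_le :
    finrank k ↥((centAlg k g e).normalizer) ≤
      finrank k ↥(centAlg k g e) + finrank k ↥(dcent k g e) := by
  have hker : LinearMap.ker (nToD k g e) =
      Submodule.comap ((centAlg k g e).normalizer : Submodule k g).subtype
        ((centAlg k g e) : Submodule k g) := by
    ext s
    constructor
    · intro hs
      have : (⁅(s : g), e⁆ : g) = 0 := congrArg Subtype.val hs
      exact this
    · intro hs
      exact Subtype.ext hs
  have hle : ((centAlg k g e) : Submodule k g) ≤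
      ((centAlg k g e).normalizer : Submodule k g) :=
    fun x hx => LieSubalgebra.le_normalizer (H := centAlg k g e) hx
  have h1 := (nToD k g e).finrank_range_add_finrank_ker
  have h2 : finrank k ↥(LinearMap.ker (nToD k g e)) = finrank k ↥(centAlg k g e) := by
    rw [hker]
    exact (Submodule.comapSubtypeEquivOfLe hle).finrank_eq
  have h3 : finrank k ↥(LinearMap.range (nToD k g e)) ≤ finrank k ↥(dcent k g e) :=
    Submodule.finrank_le _
  omega

lemma key_ineq (ξ : Module.Dual k ↥(centAlg k g e)) :
    finrank k ↥(LinearMap.range ((LinearMap.llcomp k ↥(centAlg k g e) ↥(centAlg k g e) k ξ) ∘ₗ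
        nzAct k g e)) +
      finrank k ↥(lieStab k ↥(centAlg k g e) ξ) ≤
      finrank k ↥(centAlg k g e) + finrank k ↥(dcent k g e) := by
  have hcomp := aux_rank_comp_le
    ((LinearMap.llcomp k ↥(centAlg k g e) ↥(centAlg k g e) k ξ) ∘ₗ nzAct k g e)
    (zToN k g e) (zToN_injective k g e)
  have hker : LinearMap.ker (((LinearMap.llcomp k ↥(centAlg k g e) ↥(centAlg k g e) k ξ) ∘ₗ
      nzAct k g e) ∘ₗ zToN k g e) = lieStab k ↥(centAlg k g e) ξ := by
    ext x
    simp only [LinearMap.mem_ker, LinearMap.ext_iff]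
    constructor
    · intro h y
      exact h y
    · intro h y
      exact h y
  have h2 := (((LinearMap.llcomp k ↥(centAlg k g e) ↥(centAlg k g e) k ξ) ∘ₗ
      nzAct k g e) ∘ₗ zToN k g e).finrank_range_add_finrank_ker
  rw [hker] at h2
  have h3 := finrank_normalizer_le k g e
  omega

end Aux

/-- Let `g` be a finite-dimensional simple Lie algebra over an algebraically closed field of
characteristic zero and let `e` be a nilpotent element.  Regarding the centraliser `z_g(e)` as
a module over the normaliser `n_g(e)` via the adjoint action, one has
`ind (n_g(e), z_g(e)) ≥ ind z_g(e) - dim d_g(e)`. -/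
theorem lieRepIndex_normaliser_centraliser_ge
    (k : Type*) [Field k] [IsAlgClosed k] [CharZero k]
    (g : Type*) [LieRing g] [LieAlgebra k g] [FiniteDimensional k g] [LieAlgebra.IsSimple k g]
    (e : g) (hnil : IsNilpotent (LieAlgebra.ad k g e)) :
    (lieRepIndex k (nzAct k g e) : ℤ) ≥
      (lieIndex k ↥(centAlg k g e) : ℤ) - (Module.finrank k ↥(dcent k g e) : ℤ) := by
  classical
  haveI : Nonempty (Module.Dual k ↥(centAlg k g e)) := ⟨0⟩
  have hind_le : ∀ ξ : Module.Dual k ↥(centAlg k g e),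
      lieIndex k ↥(centAlg k g e) ≤ Module.finrank k ↥(lieStab k ↥(centAlg k g e) ξ) :=
    fun ξ => ciInf_le (OrderBot.bddBelow _) ξ
  have hkey : ∀ ξ : Module.Dual k ↥(centAlg k g e),
      Module.finrank k ↥(LinearMap.range
        ((LinearMap.llcomp k ↥(centAlg k g e) ↥(centAlg k g e) k ξ) ∘ₗ nzAct k g e)) +
        lieIndex k ↥(centAlg k g e) ≤
      Module.finrank k ↥(centAlg k g e) + Module.finrank k ↥(dcent k g e) :=
    fun ξ => le_trans (Nat.add_le_add_left (hind_le ξ) _) (key_ineq k g e ξ)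
  have hrb : ∀ ξ : Module.Dual k ↥(centAlg k g e),
      Module.finrank k ↥(LinearMap.range
        ((LinearMap.llcomp k ↥(centAlg k g e) ↥(centAlg k g e) k ξ) ∘ₗ nzAct k g e)) ≤
      Module.finrank k ↥(centAlg k g e) := by
    intro ξ
    calc Module.finrank k ↥(LinearMap.range
        ((LinearMap.llcomp k ↥(centAlg k g e) ↥(centAlg k g e) k ξ) ∘ₗ nzAct k g e))
        ≤ Module.finrank k (Module.Dual k ↥(centAlg k g e)) := Submodule.finrank_le _
      _ = Module.finrank k ↥(centAlg k g e) := Subspace.dual_finrank_eq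
  have hS1 : (⨆ ξ : Module.Dual k ↥(centAlg k g e),
      Module.finrank k ↥(LinearMap.range
        ((LinearMap.llcomp k ↥(centAlg k g e) ↥(centAlg k g e) k ξ) ∘ₗ nzAct k g e))) ≤
      Module.finrank k ↥(centAlg k g e) := ciSup_le hrb
  have hid : lieIndex k ↥(centAlg k g e) ≤
      Module.finrank k ↥(centAlg k g e) + Module.finrank k ↥(dcent k g e) := by
    have h0 := hind_le 0
    have h1 : Module.finrank k ↥(lieStab k ↥(centAlg k g e) (0 : Module.Dual k ↥(centAlg k g e)))
        ≤ Module.finrank k ↥(centAlg k g e) := Submodule.finrank_le _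
    omega
  have hS2 : (⨆ ξ : Module.Dual k ↥(centAlg k g e),
      Module.finrank k ↥(LinearMap.range
        ((LinearMap.llcomp k ↥(centAlg k g e) ↥(centAlg k g e) k ξ) ∘ₗ nzAct k g e))) +
      lieIndex k ↥(centAlg k g e) ≤
      Module.finrank k ↥(centAlg k g e) + Module.finrank k ↥(dcent k g e) := by
    have h' : (⨆ ξ : Module.Dual k ↥(centAlg k g e),
        Module.finrank k ↥(LinearMap.range
          ((LinearMap.llcomp k ↥(centAlg k g e) ↥(centAlg k g e) k ξ) ∘ₗ nzAct k g e))) ≤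
        Module.finrank k ↥(centAlg k g e) + Module.finrank k ↥(dcent k g e) -
          lieIndex k ↥(centAlg k g e) :=
      ciSup_le fun ξ => by have := hkey ξ; omega
    omega
  have hrep : lieRepIndex k (nzAct k g e) =
      Module.finrank k ↥(centAlg k g e) - (⨆ ξ : Module.Dual k ↥(centAlg k g e),
      Module.finrank k ↥(LinearMap.range
        ((LinearMap.llcomp k ↥(centAlg k g e) ↥(centAlg k g e) k ξ) ∘ₗ nzAct k g e))) := rfl
  rw [hrep]
  omega
end

section
/- Let A be an associative ring and let e, h, f ∈ A satisfy e·f − f·e = h and h·e − e·h = 2e. Then for all integers i, j ≥ 1, [[e^i, f], e^j] = 2·i·j·e^{i+j−1}, where [a,b] = a·b − b·a. -/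
/-!
If `⁅a, e⁆` commutes with `e`, then `ad a` acts on powers of `e` like a derivative:
`⁅a, e ^ n⁆ = n • ⁅a, e⁆ * e ^ (n - 1)`. By the Jacobi identity, `⁅⁅e ^ i, f⁆, e⁆ = ⁅h, e ^ i⁆`,
which is `2 i • e ^ i` by this rule applied to `⁅h, e⁆ = 2 e`; this commutes with `e`, so the
rule applies once more to `⁅⁅e ^ i, f⁆, e ^ j⁆`.
-/

namespace Ring

variable {A : Type*} [Ring A]

theorem lie_mul (a b c : A) :
    ⁅a, b * c⁆ = ⁅a, b⁆ * c + b * ⁅a, c⁆ := by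
  simp only [lie_def]
  noncomm_ring

theorem lie_pow_succ_of_commute {a e : A} (hcomm : Commute e ⁅a, e⁆)
    (n : ℕ) : ⁅a, e ^ (n + 1)⁆ = (n + 1) • (⁅a, e⁆ * e ^ n) := by
  induction n with
  | zero => simp
  | succ n ih =>
    rw [pow_succ, lie_mul, ih, (hcomm.pow_left (n + 1)).eq, succ_nsmul _ (n + 1),
      smul_mul_assoc, mul_assoc, ← pow_succ]

theorem lie_lie_of_commute {x e : A} (hx : Commute x e) (f : A) :
    ⁅⁅x, f⁆, e⁆ = ⁅⁅e, f⁆, x⁆ := by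
  have jacobi : ⁅⁅x, f⁆, e⁆ = ⁅⁅e, f⁆, x⁆ + ⁅⁅x, e⁆, f⁆ := by
    simp only [lie_def]
    noncomm_ring
  rw [jacobi, commute_iff_lie_eq.mp hx, lie_def 0 f, zero_mul, mul_zero, sub_zero, add_zero]

end Ring

/-- Let `A` be an associative ring and `e h f ∈ A` with `e*f - f*e = h` and
`h*e - e*h = 2*e`.  Then for all `i, j ≥ 1`,
`[[e^i, f], e^j] = 2*i*j • e^(i+j-1)`, where `[a, b] = a*b - b*a`. -/
theorem commutator_pow_identity (A : Type*) [Ring A] (e h f : A)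
    (hef : e * f - f * e = h) (hhe : h * e - e * h = 2 * e) :
    ∀ i j : ℕ, 1 ≤ i → 1 ≤ j →
      ⁅⁅e ^ i, f⁆, e ^ j⁆ = (2 * i * j) • e ^ (i + j - 1) := by
  rintro i j hi hj
  obtain ⟨i, rfl⟩ := Nat.exists_eq_add_of_le' hi
  obtain ⟨j, rfl⟩ := Nat.exists_eq_add_of_le' hj
  have hef' : ⁅e, f⁆ = h := hef
  have hhe' : ⁅h, e⁆ = 2 * e := hhe
  have h_ad_e : ⁅⁅e ^ (i + 1), f⁆, e⁆ = (2 * (i + 1)) • e ^ (i + 1) := by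
    have hcomm : Commute e ⁅h, e⁆ := by
      rw [hhe']
      exact (Commute.ofNat_right e 2).mul_right (Commute.refl e)
    rw [Ring.lie_lie_of_commute (Commute.pow_self e (i + 1)) f, hef',
      Ring.lie_pow_succ_of_commute hcomm, hhe', mul_assoc, ← pow_succ', ← Nat.ofNat_nsmul_eq_mul,
      smul_smul, mul_comm]
  have hcomm : Commute e ⁅⁅e ^ (i + 1), f⁆, e⁆ := by
    rw [h_ad_e]
    exact (Commute.self_pow e _).smul_right _
  rw [Ring.lie_pow_succ_of_commute hcomm, h_ad_e, smul_mul_assoc, ← pow_add, smul_smul,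
    show i + 1 + (j + 1) - 1 = i + 1 + j by omega]
  congr 1
  ring
end

section
/- Let g be a finite-dimensional simple Lie algebra over a field of characteristic 0 and let h be a Lie subalgebra of g such that the restriction of the Killing form of g to h is nondegenerate. Let h^⊥ be the orthogonal complement of h with respect to the Killing form. Then the Lie subalgebra of g generated by h^⊥ is an ideal of g; in particular, if h ≠ g, then this subalgebra equals g. -/
/-! The orthogonal complement `h^⊥` is stable under `ad h`, hence so is the Lie subalgebra it
generates, which is trivially stable under `ad h^⊥`. Nondegeneracy on `h` gives `g = h ⊕ h^⊥`,
so this subalgebra is an ideal; by simplicity it is `0` or `g`, and it is `0` only if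
`h^⊥ = 0`, i.e. `h = g`. -/

namespace LieSubalgebra

variable {R L : Type*} [CommRing R] [LieRing L] [LieAlgebra R L]

theorem lie_mem_lieSpan_of_forall_lie_mem {s : Set L} {a : L}
    (hs : ∀ z ∈ s, ⁅a, z⁆ ∈ lieSpan R L s) {y : L} (hy : y ∈ lieSpan R L s) :
    ⁅a, y⁆ ∈ lieSpan R L s := by
  induction hy using lieSpan_induction with
  | mem z hz => exact hs z hz
  | zero => simp
  | add y z _ _ hy hz => simpa only [lie_add] using add_mem hy hz
  | smul c y _ hy => simpa only [lie_smul] using (lieSpan R L s).smul_mem c hy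
  | lie y z hy' hz' hy hz =>
    rw [leibniz_lie]
    exact add_mem (lie_mem _ hy hz') (lie_mem _ hy' hz)

theorem lie_mem_lieSpan_of_sup_span_eq_top {h : LieSubalgebra R L} {s : Set L}
    (hs : ∀ a ∈ h, ∀ z ∈ s, ⁅a, z⁆ ∈ s) (hsup : h.toSubmodule ⊔ Submodule.span R s = ⊤)
    (x : L) {y : L} (hy : y ∈ lieSpan R L s) : ⁅x, y⁆ ∈ lieSpan R L s := by
  obtain ⟨a, ha, b, hb, rfl⟩ := Submodule.mem_sup.mp (hsup ▸ Submodule.mem_top : x ∈ _)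
  rw [add_lie]
  have had : ⁅a, y⁆ ∈ lieSpan R L s :=
    lie_mem_lieSpan_of_forall_lie_mem (fun z hz ↦ subset_lieSpan (hs a ha z hz)) hy
  exact add_mem had (lie_mem _ (submodule_span_le_lieSpan hb) hy)

theorem eq_bot_or_eq_top_of_forall_lie_mem [LieAlgebra.IsSimple R L] (K : LieSubalgebra R L)
    (hK : ∀ x y : L, y ∈ K → ⁅x, y⁆ ∈ K) : K = ⊥ ∨ K = ⊤ := by
  obtain ⟨I, rfl⟩ := (exists_lieIdeal_coe_eq_iff R K).mpr hK
  refine (LieAlgebra.IsSimple.eq_bot_or_eq_top I).imp ?_ ?_ <;> rintro rfl <;> ext <;> simp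

end LieSubalgebra

namespace LieModule

theorem lie_mem_traceForm_orthogonal {R L M : Type*} [CommRing R] [LieRing L] [LieAlgebra R L]
    [AddCommGroup M] [Module R M] [LieRingModule L M] [LieModule R L M]
    {h : LieSubalgebra R L} {a z : L} (ha : a ∈ h)
    (hz : ∀ m ∈ h, traceForm R L M z m = 0) : ∀ m ∈ h, traceForm R L M ⁅a, z⁆ m = 0 := by
  intro m hm
  rw [traceForm_apply_lie_apply', hz _ (h.lie_mem ha hm), neg_zero]

theorem sup_span_traceForm_orthogonal_eq_top {K L M : Type*} [Field K] [LieRing L]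
    [LieAlgebra K L] [FiniteDimensional K L] [AddCommGroup M] [Module K M] [LieRingModule L M]
    [LieModule K L M] {h : LieSubalgebra K L}
    (hnd : ∀ x ∈ h, (∀ y ∈ h, traceForm K L M x y = 0) → x = 0) :
    h.toSubmodule ⊔ Submodule.span K {z : L | ∀ m ∈ h, traceForm K L M z m = 0} = ⊤ := by
  have hsymm := traceForm_isSymm K L M
  have hres : ((traceForm K L M).restrict h.toSubmodule).Nondegenerate := by
    constructor <;> rintro ⟨x, hx⟩ hx0 <;> refine Subtype.ext (hnd x hx fun y hy ↦ ?_)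
    · exact hx0 ⟨y, hy⟩
    · exact hsymm.isRefl y x (hx0 ⟨y, hy⟩)
  have hcompl :=
    LinearMap.BilinForm.isCompl_orthogonal_of_restrict_nondegenerate hsymm.isRefl hres
  refine eq_top_iff.mpr (hcompl.sup_eq_top ▸ sup_le_sup_left (fun z hz ↦ ?_) _)
  exact Submodule.subset_span fun m hm ↦ hsymm.isRefl m z (hz m hm)

end LieModule

theorem lieSpan_orthogonal_isIdeal_general
    (k : Type*) [Field k]
    (g : Type*) [LieRing g] [LieAlgebra k g] [FiniteDimensional k g] [LieAlgebra.IsSimple k g]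
    (h : LieSubalgebra k g)
    (hnd : ∀ x ∈ h, (∀ y ∈ h, killingForm k g x y = 0) → x = 0) :
    (∀ x : g, ∀ y ∈ LieSubalgebra.lieSpan k g {z : g | ∀ m ∈ h, killingForm k g z m = 0},
        ⁅x, y⁆ ∈ LieSubalgebra.lieSpan k g {z : g | ∀ m ∈ h, killingForm k g z m = 0}) ∧
    (h ≠ ⊤ →
      LieSubalgebra.lieSpan k g {z : g | ∀ m ∈ h, killingForm k g z m = 0} = ⊤) := by
  set S : Set g := {z : g | ∀ m ∈ h, killingForm k g z m = 0}
  have hsup : h.toSubmodule ⊔ Submodule.span k S = ⊤ :=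
    LieModule.sup_span_traceForm_orthogonal_eq_top hnd
  have hinv : ∀ a ∈ h, ∀ z ∈ S, ⁅a, z⁆ ∈ S := fun _ ha _ hz ↦
    LieModule.lie_mem_traceForm_orthogonal (M := g) ha hz
  have hideal :
      ∀ x : g, ∀ y ∈ LieSubalgebra.lieSpan k g S, ⁅x, y⁆ ∈ LieSubalgebra.lieSpan k g S :=
    fun x _ hy ↦ LieSubalgebra.lie_mem_lieSpan_of_sup_span_eq_top hinv hsup x hy
  refine ⟨hideal, fun hne ↦ ?_⟩
  refine (LieSubalgebra.eq_bot_or_eq_top_of_forall_lie_mem _ hideal).resolve_left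
    fun hbot ↦ hne ?_
  have hspan : Submodule.span k S = ⊥ :=
    eq_bot_iff.mpr <| (LieSubalgebra.submodule_span_le_lieSpan (R := k)).trans (by simp [hbot])
  rwa [hspan, sup_bot_eq, LieSubalgebra.toSubmodule_eq_top] at hsup

/-- Let `g` be a finite-dimensional simple Lie algebra over a field of characteristic zero and
let `h` be a Lie subalgebra on which the Killing form of `g` is nondegenerate.  Then the Lie
subalgebra generated by the orthogonal complement `h^⊥` (with respect to the Killing form) is
an ideal of `g`; in particular, if `h ≠ g` then this subalgebra equals `g`. -/
theorem lieSpan_orthogonal_isIdeal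
    (k : Type*) [Field k] [CharZero k]
    (g : Type*) [LieRing g] [LieAlgebra k g] [FiniteDimensional k g] [LieAlgebra.IsSimple k g]
    (h : LieSubalgebra k g)
    (hnd : ∀ x ∈ h, (∀ y ∈ h, killingForm k g x y = 0) → x = 0) :
    (∀ x : g, ∀ y ∈ LieSubalgebra.lieSpan k g {z : g | ∀ m ∈ h, killingForm k g z m = 0},
        ⁅x, y⁆ ∈ LieSubalgebra.lieSpan k g {z : g | ∀ m ∈ h, killingForm k g z m = 0}) ∧
    (h ≠ ⊤ →
      LieSubalgebra.lieSpan k g {z : g | ∀ m ∈ h, killingForm k g z m = 0} = ⊤) :=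
  lieSpan_orthogonal_isIdeal_general k g h hnd
end
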